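/- arXiv:2205.08302 — 6 statements merged into one kernel-verified Lean document; each statement's English description precedes it below -/
import Mathlib

section
/- Let M be a 5×5 complex matrix of the shape [[1,0,0,h₁,h₂],[0,g₁₁,g₁₂,g₁₃,g₁₄],[0,0,g₂₂,g₂₃,g₂₄],[0,0,0,g₃₃,g₃₄],[0,0,0,0,g₄₄]] (first column (1,0,0,0,0)ᵀ, first row (1,0,0,h₁,h₂), upper triangular in the remaining 4×4 block). Then MᵀΦM = Φ holds if and only if g₁₁g₄₄ = 1, g₂₂g₃₃ = 1, g₁₂g₄₄ + g₂₂g₃₄ = 0 and g₁₃g₄₄ + g₂₃g₃₄ − g₂₄g₃₃ = 0; that is, if and only if M belongs to the group G. In particular the conditions are independent of h₁ and h₂. -/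
open Matrix

/-- The intersection-form matrix Φ. -/
def Phi : Matrix (Fin 5) (Fin 5) ℂ :=
  !![0, 0, 0, 0, 0;
     0, 0, 0, 0, 1;
     0, 0, 0, 1, 0;
     0, 0, -1, 0, 0;
     0, -1, 0, 0, 0]

/-- The group `G` of matrices preserving Φ, as a set of 5×5 complex matrices. -/
def GSet : Set (Matrix (Fin 5) (Fin 5) ℂ) :=
  {M | ∃ h₁ h₂ g₁₁ g₁₂ g₁₃ g₁₄ g₂₂ g₂₃ g₂₄ g₃₃ g₃₄ g₄₄ : ℂ,
    M = !![1, 0, 0, h₁, h₂;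
           0, g₁₁, g₁₂, g₁₃, g₁₄;
           0, 0, g₂₂, g₂₃, g₂₄;
           0, 0, 0, g₃₃, g₃₄;
           0, 0, 0, 0, g₄₄] ∧
    g₁₁ * g₄₄ = 1 ∧ g₂₂ * g₃₃ = 1 ∧ g₁₂ * g₄₄ + g₂₂ * g₃₄ = 0 ∧
    g₁₃ * g₄₄ + g₂₃ * g₃₄ - g₂₄ * g₃₃ = 0}

/-- Entry formula for `Aᵀ * Phi * A`, using that Φ has only four nonzero entries. -/
lemma phi_entry (A : Matrix (Fin 5) (Fin 5) ℂ) (i j : Fin 5) :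
    (Aᵀ * Phi * A) i j = A 1 i * A 4 j + A 2 i * A 3 j - A 3 i * A 2 j - A 4 i * A 1 j := by
  simp [Phi, Matrix.mul_apply, Fin.sum_univ_five]
  ring

/-- Any matrix of the given shape satisfying the four relations preserves Φ. -/
lemma aux_preserves (h₁ h₂ g₁₁ g₁₂ g₁₃ g₁₄ g₂₂ g₂₃ g₂₄ g₃₃ g₃₄ g₄₄ : ℂ)
    (c1 : g₁₁ * g₄₄ = 1) (c2 : g₂₂ * g₃₃ = 1)
    (c3 : g₁₂ * g₄₄ + g₂₂ * g₃₄ = 0)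
    (c4 : g₁₃ * g₄₄ + g₂₃ * g₃₄ - g₂₄ * g₃₃ = 0) :
    (!![1, 0, 0, h₁, h₂;
        0, g₁₁, g₁₂, g₁₃, g₁₄;
        0, 0, g₂₂, g₂₃, g₂₄;
        0, 0, 0, g₃₃, g₃₄;
        0, 0, 0, 0, g₄₄])ᵀ * Phi *
      !![1, 0, 0, h₁, h₂;
         0, g₁₁, g₁₂, g₁₃, g₁₄;
         0, 0, g₂₂, g₂₃, g₂₄;
         0, 0, 0, g₃₃, g₃₄;
         0, 0, 0, 0, g₄₄] = Phi := by
  ext i j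
  rw [phi_entry]
  fin_cases i <;> fin_cases j <;> simp [Phi, Matrix.vecHead, Matrix.vecTail] <;>
    first
      | ring1
      | assumption
      | linear_combination c1
      | linear_combination -c1
      | linear_combination c2
      | linear_combination -c2
      | linear_combination c3
      | linear_combination -c3
      | linear_combination c4
      | linear_combination -c4

theorem phi_preserving_iff_relations
    (h₁ h₂ g₁₁ g₁₂ g₁₃ g₁₄ g₂₂ g₂₃ g₂₄ g₃₃ g₃₄ g₄₄ : ℂ)
    (M : Matrix (Fin 5) (Fin 5) ℂ)
    (hM : M = !![1, 0, 0, h₁, h₂;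
                 0, g₁₁, g₁₂, g₁₃, g₁₄;
                 0, 0, g₂₂, g₂₃, g₂₄;
                 0, 0, 0, g₃₃, g₃₄;
                 0, 0, 0, 0, g₄₄]) :
    ((Mᵀ * Phi * M = Phi) ↔
      (g₁₁ * g₄₄ = 1 ∧ g₂₂ * g₃₃ = 1 ∧ g₁₂ * g₄₄ + g₂₂ * g₃₄ = 0 ∧
        g₁₃ * g₄₄ + g₂₃ * g₃₄ - g₂₄ * g₃₃ = 0)) ∧
    ((Mᵀ * Phi * M = Phi) ↔ M ∈ GSet) := by
  have key : (Mᵀ * Phi * M = Phi) ↔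
      (g₁₁ * g₄₄ = 1 ∧ g₂₂ * g₃₃ = 1 ∧ g₁₂ * g₄₄ + g₂₂ * g₃₄ = 0 ∧
        g₁₃ * g₄₄ + g₂₃ * g₃₄ - g₂₄ * g₃₃ = 0) := by
    constructor
    · intro h
      have e1 : (Mᵀ * Phi * M) 1 4 = Phi 1 4 := by rw [h]
      have e2 : (Mᵀ * Phi * M) 2 3 = Phi 2 3 := by rw [h]
      have e3 : (Mᵀ * Phi * M) 2 4 = Phi 2 4 := by rw [h]
      have e4 : (Mᵀ * Phi * M) 3 4 = Phi 3 4 := by rw [h]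
      rw [phi_entry] at e1 e2 e3 e4
      subst hM
      simp [Phi, Matrix.vecHead, Matrix.vecTail] at e1 e2 e3 e4
      exact ⟨by linear_combination e1, by linear_combination e2,
        by linear_combination e3, by linear_combination e4⟩
    · rintro ⟨c1, c2, c3, c4⟩
      rw [hM]
      exact aux_preserves h₁ h₂ _ _ _ _ _ _ _ _ _ _ c1 c2 c3 c4
  refine ⟨key, ⟨fun h => ⟨h₁, h₂, g₁₁, g₁₂, g₁₃, g₁₄, g₂₂, g₂₃, g₂₄, g₃₃, g₃₄, g₄₄,
    hM, key.mp h⟩, ?_⟩⟩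
  rintro ⟨a, b, x1, x2, x3, x4, x5, x6, x7, x8, x9, x10, hEq, c1, c2, c3, c4⟩
  rw [hEq]
  exact aux_preserves a b x1 x2 x3 x4 x5 x6 x7 x8 x9 x10 c1 c2 c3 c4
end

section
/- Consider the map sending (g₁,g₂,g₃,g₄,g₅,g₆,h₁,h₂) ∈ (ℂ*)² × ℂ⁶ to the 5×5 matrix [[1,0,0,h₁,h₂],[0, g₁⁻², −g₃g₁⁻², (−g₃g₆+g₄)g₁⁻², (−g₃g₄+g₅)g₁⁻²],[0,0, g₂⁻¹, g₆g₂⁻¹, g₄g₂⁻¹],[0,0,0, g₂, g₂g₃],[0,0,0,0, g₁²]]. Then (a) every matrix in the image of this map belongs to G, and (b) every element of G lies in the image of this map; i.e., the 8-parameter coordinate map is a surjection onto G. -/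
open Matrix

/-- The 8-parameter coordinate map for `G`. -/
noncomputable def paramG (g₁ g₂ g₃ g₄ g₅ g₆ h₁ h₂ : ℂ) : Matrix (Fin 5) (Fin 5) ℂ :=
  !![1, 0, 0, h₁, h₂;
     0, (g₁ ^ 2)⁻¹, -g₃ * (g₁ ^ 2)⁻¹, (-g₃ * g₆ + g₄) * (g₁ ^ 2)⁻¹,
       (-g₃ * g₄ + g₅) * (g₁ ^ 2)⁻¹;
     0, 0, g₂⁻¹, g₆ * g₂⁻¹, g₄ * g₂⁻¹;
     0, 0, 0, g₂, g₂ * g₃;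
     0, 0, 0, 0, g₁ ^ 2]

theorem paramG_surjects_onto_GSet :
    (∀ g₁ g₂ g₃ g₄ g₅ g₆ h₁ h₂ : ℂ, g₁ ≠ 0 → g₂ ≠ 0 →
      paramG g₁ g₂ g₃ g₄ g₅ g₆ h₁ h₂ ∈ GSet) ∧
    (∀ M ∈ GSet, ∃ g₁ g₂ g₃ g₄ g₅ g₆ h₁ h₂ : ℂ,
      g₁ ≠ 0 ∧ g₂ ≠ 0 ∧ M = paramG g₁ g₂ g₃ g₄ g₅ g₆ h₁ h₂) := by
  constructor
  · intro g₁ g₂ g₃ g₄ g₅ g₆ h₁ h₂ hg₁ hg₂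
    refine ⟨h₁, h₂, (g₁ ^ 2)⁻¹, -g₃ * (g₁ ^ 2)⁻¹, (-g₃ * g₆ + g₄) * (g₁ ^ 2)⁻¹,
      (-g₃ * g₄ + g₅) * (g₁ ^ 2)⁻¹, g₂⁻¹, g₆ * g₂⁻¹, g₄ * g₂⁻¹, g₂, g₂ * g₃, g₁ ^ 2,
      rfl, ?_, ?_, ?_, ?_⟩ <;> field_simp <;> ring
  · rintro M ⟨h₁, h₂, g₁₁, g₁₂, g₁₃, g₁₄, g₂₂, g₂₃, g₂₄, g₃₃, g₃₄, g₄₄, rfl,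
      e1, e2, e3, e4⟩
    have hg₄₄ : g₄₄ ≠ 0 := fun h => by simp [h] at e1
    have hg₃₃ : g₃₃ ≠ 0 := fun h => by simp [h] at e2
    obtain ⟨g₁, hg₁⟩ := IsAlgClosed.exists_pow_nat_eq g₄₄ (n := 2) (by norm_num)
    have hg₁0 : g₁ ≠ 0 := fun h => hg₄₄ (by simp [← hg₁, h])
    refine ⟨g₁, g₃₃, g₃₄ / g₃₃, g₂₄ * g₃₃, g₁₄ * g₄₄ + (g₃₄ / g₃₃) * (g₂₄ * g₃₃),
      g₂₃ * g₃₃, h₁, h₂, hg₁0, hg₃₃, ?_⟩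
    have e11 : g₁₁ = g₄₄⁻¹ := by
      field_simp; linear_combination e1
    have e22 : g₂₂ = g₃₃⁻¹ := by field_simp; linear_combination e2
    ext i j
    fin_cases i <;> fin_cases j <;>
      simp [paramG, hg₁, e11, e22, Matrix.cons_val_zero, Matrix.cons_val_one]
    · field_simp
      linear_combination g₃₃ * e3 - g₃₄ * e2
    · field_simp
      linear_combination e4
    · field_simp
    · field_simp
    · field_simp
    · field_simp
end

section
/- Let P = (P_{ij}), i,j ∈ {0,...,4}, be a nondegenerate period matrix and let g ∈ G be the unique element such that τ := Pg is of τ-form with parameters τ₀,...,τ₅. Then these parameters are given explicitly by: τ₀ = P₁₁/P₂₁, τ₁ = P₃₁/P₂₁, τ₂ = P₄₁/P₂₁, τ₃ = (P₂₂P₃₁ − P₂₁P₃₂)/(P₁₁P₂₂ − P₁₂P₂₁), τ₄ = P₀₁/P₂₁, τ₅ = (P₀₁P₂₂ − P₀₂P₂₁)/(P₁₁P₂₂ − P₁₂P₂₁); moreover the (5,3) entry of τ satisfies (P₂₂P₄₁ − P₂₁P₄₂)/(P₁₁P₂₂ − P₁₂P₂₁) = −τ₀τ₃ + τ₁. -/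
open Matrix

/-- The intersection matrix Ψ of the homology basis δ. -/
def Psi : Matrix (Fin 5) (Fin 5) ℂ :=
  !![0, 0, 0, 0, 0;
     0, 0, 0, 1, 0;
     0, 0, 0, 0, 1;
     0, -1, 0, 0, 0;
     0, 0, -1, 0, 0]

/-- The τ-form matrix with parameters τ₀,…,τ₅. -/
def tauMat (τ₀ τ₁ τ₂ τ₃ τ₄ τ₅ : ℂ) : Matrix (Fin 5) (Fin 5) ℂ :=
  !![1, τ₄, τ₅, 0, 0;
     0, τ₀, 1, 0, 0;
     0, 1, 0, 0, 0;
     0, τ₁, τ₃, 1, 0;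
     0, τ₂, -τ₀ * τ₃ + τ₁, -τ₀, 1]

theorem tau_parameters_explicit
    (P : Matrix (Fin 5) (Fin 5) ℂ)
    (hcol : ∀ i, P i 0 = if i = 0 then 1 else 0)
    (hP : Pᵀ * Psi * P = Phi)
    (h21 : P 2 1 ≠ 0)
    (hnd : P 1 1 * P 2 2 - P 1 2 * P 2 1 ≠ 0)
    (g : Matrix (Fin 5) (Fin 5) ℂ) (hg : g ∈ GSet)
    (τ₀ τ₁ τ₂ τ₃ τ₄ τ₅ : ℂ)
    (heq : P * g = tauMat τ₀ τ₁ τ₂ τ₃ τ₄ τ₅) :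
    τ₀ = P 1 1 / P 2 1 ∧
    τ₁ = P 3 1 / P 2 1 ∧
    τ₂ = P 4 1 / P 2 1 ∧
    τ₃ = (P 2 2 * P 3 1 - P 2 1 * P 3 2) / (P 1 1 * P 2 2 - P 1 2 * P 2 1) ∧
    τ₄ = P 0 1 / P 2 1 ∧
    τ₅ = (P 0 1 * P 2 2 - P 0 2 * P 2 1) / (P 1 1 * P 2 2 - P 1 2 * P 2 1) ∧
    (P 2 2 * P 4 1 - P 2 1 * P 4 2) / (P 1 1 * P 2 2 - P 1 2 * P 2 1)
      = -τ₀ * τ₃ + τ₁ := by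

  obtain ⟨h₁, h₂, g₁₁, g₁₂, g₁₃, g₁₄, g₂₂, g₂₃, g₂₄, g₃₃, g₃₄, g₄₄,
    rfl, hc1, hc2, hc3, hc4⟩ := hg
  have E : ∀ i j : Fin 5, (P * !![1, 0, 0, h₁, h₂;
           0, g₁₁, g₁₂, g₁₃, g₁₄;
           0, 0, g₂₂, g₂₃, g₂₄;
           0, 0, 0, g₃₃, g₃₄;
           0, 0, 0, 0, g₄₄]) i j = tauMat τ₀ τ₁ τ₂ τ₃ τ₄ τ₅ i j := by
    intro i j; rw [heq]
  have e01 := E 0 1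
  have e11 := E 1 1
  have e21 := E 2 1
  have e31 := E 3 1
  have e41 := E 4 1
  have e02 := E 0 2
  have e12 := E 1 2
  have e22 := E 2 2
  have e32 := E 3 2
  have e42 := E 4 2
  simp [Matrix.mul_apply, Fin.sum_univ_five, tauMat, Matrix.vecHead, Matrix.vecTail] at e01 e11 e21 e31 e41 e02 e12 e22 e32 e42
  refine ⟨?_, ?_, ?_, ?_, ?_, ?_, ?_⟩
  · field_simp
    linear_combination P 1 1 * e21 - P 2 1 * e11
  · field_simp
    linear_combination P 3 1 * e21 - P 2 1 * e31
  · field_simp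
    linear_combination P 4 1 * e21 - P 2 1 * e41
  · rw [eq_div_iff hnd]
    linear_combination (P 2 2 * P 3 1 - P 2 1 * P 3 2) * e12
      - (P 1 1 * P 2 2 - P 1 2 * P 2 1) * e32
      - (P 1 2 * P 3 1 - P 1 1 * P 3 2) * e22
  · field_simp
    linear_combination P 0 1 * e21 - P 2 1 * e01
  · rw [eq_div_iff hnd]
    linear_combination (P 2 2 * P 0 1 - P 2 1 * P 0 2) * e12
      - (P 1 1 * P 2 2 - P 1 2 * P 2 1) * e02
      - (P 1 2 * P 0 1 - P 1 1 * P 0 2) * e22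
  · rw [div_eq_iff hnd]
    linear_combination (P 1 1 * P 2 2 - P 1 2 * P 2 1) * e42
      - (P 2 2 * P 4 1 - P 2 1 * P 4 2) * e12
      + (P 1 2 * P 4 1 - P 1 1 * P 4 2) * e22
end

section
/- Let P = (P_{ij}), i,j ∈ {0,...,4}, be a nondegenerate period matrix and let g ∈ G be the unique element such that Pg is of τ-form. Then the inverse g' := g⁻¹ admits coordinates (g₁',g₂',g₃',g₄',g₅',g₆',h₁',h₂') in the parametrization of G satisfying: (g₁')² = P₂₁⁻¹, g₂' = −P₂₁/(P₁₁P₂₂ − P₁₂P₂₁), g₃' = −P₂₂/P₂₁, g₄' = (−P₁₂P₂₃ + P₁₃P₂₂)/(P₁₁P₂₂ − P₁₂P₂₁), g₅' = (P₁₁P₂₂P₂₄ − P₁₂P₂₁P₂₄ + P₁₂P₂₂P₂₃ − P₁₃P₂₂²)/(P₁₁P₂₁P₂₂ − P₁₂P₂₁²), g₆' = (P₁₁P₂₃ − P₁₃P₂₁)/(P₁₁P₂₂ − P₁₂P₂₁). -/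
open Matrix

set_option maxHeartbeats 1000000 in
private lemma paramG_eq_aux (a b c p q r s H1 H2 z : ℂ) (hp : p ≠ 0)
    (hD : a * q - b * p ≠ 0) (hz : z ^ 2 = p⁻¹) :
    paramG z (-(p / (a * q - b * p))) (-(q / p))
        ((-b * r + c * q) / (a * q - b * p))
        ((a * q * s - b * p * s + b * q * r - c * q ^ 2) / ((a * q - b * p) * p))
        ((a * r - c * p) / (a * q - b * p)) H1 H2 =
    !![1, 0, 0, H1, H2;
       0, p, q, r, s;
       0, 0, -((a * q - b * p) / p), (c * p - a * r) / p, (b * r - c * q) / p;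
       0, 0, 0, -(p / (a * q - b * p)), q / (a * q - b * p);
       0, 0, 0, 0, p⁻¹] := by
  ext i j
  fin_cases i <;> fin_cases j <;>
    simp [paramG, hz, inv_inv, inv_neg, inv_div] <;>
    field_simp [show q * a - p * b ≠ 0 from fun h => hD (by linear_combination h), show q * a - b * p ≠ 0 from fun h => hD (by linear_combination h), show a * q - p * b ≠ 0 from fun h => hD (by linear_combination h), show -(b * p) + q * a ≠ 0 from fun h => hD (by linear_combination h), show -(p * b) + q * a ≠ 0 from fun h => hD (by linear_combination h)] <;>
    ring

set_option maxHeartbeats 1000000 in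
private lemma key_mul_aux (a b c p q r s h₁ h₂ z : ℂ) (hp : p ≠ 0)
    (hD : a * q - b * p ≠ 0) (hz : z ^ 2 = p⁻¹) :
    !![1, 0, 0, h₁, h₂;
       0, p⁻¹, q / (a * q - b * p), (c * q - b * r) / p, -s;
       0, 0, -p / (a * q - b * p), (a * r - c * p) / p, -r;
       0, 0, 0, -(a * q - b * p) / p, q;
       0, 0, 0, 0, p] *
      paramG z (-(p / (a * q - b * p))) (-(q / p))
        ((-b * r + c * q) / (a * q - b * p))
        ((a * q * s - b * p * s + b * q * r - c * q ^ 2) / ((a * q - b * p) * p))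
        ((a * r - c * p) / (a * q - b * p))
        (h₁ * p / (a * q - b * p)) (-(h₁ * q) / (a * q - b * p) - h₂ / p) = 1 := by
  rw [paramG_eq_aux a b c p q r s _ _ z hp hD hz]
  ext i j
  fin_cases i <;> fin_cases j <;>
    simp [Matrix.mul_apply, Fin.sum_univ_five, Matrix.vecHead, Matrix.vecTail,
      Matrix.one_apply] <;>
    field_simp [show q * a - p * b ≠ 0 from fun h => hD (by linear_combination h), show q * a - b * p ≠ 0 from fun h => hD (by linear_combination h), show a * q - p * b ≠ 0 from fun h => hD (by linear_combination h), show -(b * p) + q * a ≠ 0 from fun h => hD (by linear_combination h), show -(p * b) + q * a ≠ 0 from fun h => hD (by linear_combination h)] <;>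
    ring

theorem inverse_g_coordinates
    (P : Matrix (Fin 5) (Fin 5) ℂ)
    (hcol : ∀ i, P i 0 = if i = 0 then 1 else 0)
    (hP : Pᵀ * Psi * P = Phi)
    (h21 : P 2 1 ≠ 0)
    (hnd : P 1 1 * P 2 2 - P 1 2 * P 2 1 ≠ 0)
    (g : Matrix (Fin 5) (Fin 5) ℂ) (hg : g ∈ GSet)
    (htau : ∃ τ₀ τ₁ τ₂ τ₃ τ₄ τ₅ : ℂ, P * g = tauMat τ₀ τ₁ τ₂ τ₃ τ₄ τ₅) :
    ∃ g₁' g₂' g₃' g₄' g₅' g₆' h₁' h₂' : ℂ,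
      g₁' ≠ 0 ∧ g₂' ≠ 0 ∧
      g⁻¹ = paramG g₁' g₂' g₃' g₄' g₅' g₆' h₁' h₂' ∧
      g₁' ^ 2 = (P 2 1)⁻¹ ∧
      g₂' = -P 2 1 / (P 1 1 * P 2 2 - P 1 2 * P 2 1) ∧
      g₃' = -P 2 2 / P 2 1 ∧
      g₄' = (-(P 1 2) * P 2 3 + P 1 3 * P 2 2) / (P 1 1 * P 2 2 - P 1 2 * P 2 1) ∧
      g₅' = (P 1 1 * P 2 2 * P 2 4 - P 1 2 * P 2 1 * P 2 4 + P 1 2 * P 2 2 * P 2 3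
              - P 1 3 * P 2 2 ^ 2) / (P 1 1 * P 2 1 * P 2 2 - P 1 2 * P 2 1 ^ 2) ∧
      g₆' = (P 1 1 * P 2 3 - P 1 3 * P 2 1) / (P 1 1 * P 2 2 - P 1 2 * P 2 1) := by
  obtain ⟨h₁, h₂, g₁₁, g₁₂, g₁₃, g₁₄, g₂₂, g₂₃, g₂₄, g₃₃, g₃₄, g₄₄, hgm, c1, c2, c3, c4⟩ := hg
  obtain ⟨τ₀, τ₁, τ₂, τ₃, τ₄, τ₅, hPg⟩ := htau
  have h10 : P 1 0 = 0 := by simpa using hcol 1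
  have h20 : P 2 0 = 0 := by simpa using hcol 2
  subst hgm
  have cancel : ∀ x y d : ℂ, d ≠ 0 → (x - y) * d = 0 → x = y := by
    intro x y d hd h
    exact sub_eq_zero.mp ((mul_eq_zero.mp h).resolve_right hd)
  have e21 : P 2 1 * g₁₁ = 1 := by
    have h := congrFun (congrFun hPg 2) 1
    simp [Matrix.mul_apply, Fin.sum_univ_five, tauMat, h20, Matrix.vecHead, Matrix.vecTail] at h
    linear_combination h
  have e12 : P 1 1 * g₁₂ + P 1 2 * g₂₂ = 1 := by
    have h := congrFun (congrFun hPg 1) 2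
    simp [Matrix.mul_apply, Fin.sum_univ_five, tauMat, h10, Matrix.vecHead, Matrix.vecTail] at h
    linear_combination h
  have e22 : P 2 1 * g₁₂ + P 2 2 * g₂₂ = 0 := by
    have h := congrFun (congrFun hPg 2) 2
    simp [Matrix.mul_apply, Fin.sum_univ_five, tauMat, h20, Matrix.vecHead, Matrix.vecTail] at h
    linear_combination h
  have e13 : P 1 1 * g₁₃ + P 1 2 * g₂₃ + P 1 3 * g₃₃ = 0 := by
    have h := congrFun (congrFun hPg 1) 3
    simp [Matrix.mul_apply, Fin.sum_univ_five, tauMat, h10, Matrix.vecHead, Matrix.vecTail] at h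
    linear_combination h
  have e23 : P 2 1 * g₁₃ + P 2 2 * g₂₃ + P 2 3 * g₃₃ = 0 := by
    have h := congrFun (congrFun hPg 2) 3
    simp [Matrix.mul_apply, Fin.sum_univ_five, tauMat, h20, Matrix.vecHead, Matrix.vecTail] at h
    linear_combination h
  have e24 : P 2 1 * g₁₄ + P 2 2 * g₂₄ + P 2 3 * g₃₄ + P 2 4 * g₄₄ = 0 := by
    have h := congrFun (congrFun hPg 2) 4
    simp [Matrix.mul_apply, Fin.sum_univ_five, tauMat, h20, Matrix.vecHead, Matrix.vecTail] at h
    linear_combination h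
  set D := P 1 1 * P 2 2 - P 1 2 * P 2 1 with hDdef
  have V11 : g₁₁ * P 2 1 = 1 := by linear_combination e21
  have V12 : g₁₂ * D = P 2 2 := by
    linear_combination P 2 2 * e12 - P 1 2 * e22
  have V22 : g₂₂ * D = -(P 2 1) := by
    linear_combination P 1 1 * e22 - P 2 1 * e12
  have V44 : g₄₄ = P 2 1 := by
    linear_combination P 2 1 * c1 - g₄₄ * V11
  have V33 : g₃₃ * P 2 1 = -D := by
    linear_combination g₃₃ * V22 - D * c2
  have V13 : g₁₃ * P 2 1 = P 1 3 * P 2 2 - P 1 2 * P 2 3 := by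
    refine cancel _ _ _ hnd ?_
    linear_combination P 2 1 * P 2 2 * e13 - P 2 1 * P 1 2 * e23
      - (P 1 3 * P 2 2 - P 1 2 * P 2 3) * V33
  have V23 : g₂₃ * P 2 1 = P 1 1 * P 2 3 - P 1 3 * P 2 1 := by
    refine cancel _ _ _ hnd ?_
    linear_combination P 1 1 * P 2 1 * e23 - P 2 1 * P 2 1 * e13
      - (P 1 1 * P 2 3 - P 1 3 * P 2 1) * V33
  have V34 : g₃₄ = P 2 2 := by
    refine cancel _ _ _ h21 ?_
    linear_combination -(D * c3) + g₄₄ * V12 + g₃₄ * V22 + P 2 2 * V44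
  have V24 : g₂₄ = -(P 2 3) := by
    refine cancel _ _ _ hnd ?_
    linear_combination P 2 1 * c4 - g₄₄ * V13 - g₃₄ * V23 + g₂₄ * V33
      - (P 1 3 * P 2 2 - P 1 2 * P 2 3) * V44 - (P 1 1 * P 2 3 - P 1 3 * P 2 1) * V34
  have V14 : g₁₄ = -(P 2 4) := by
    refine cancel _ _ _ h21 ?_
    linear_combination e24 - P 2 2 * V24 - P 2 3 * V34 - P 2 4 * V44
  have v11 : g₁₁ = (P 2 1)⁻¹ := by field_simp; linear_combination V11
  have v12 : g₁₂ = P 2 2 / D := by field_simp; linear_combination V12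
  have v22 : g₂₂ = -(P 2 1) / D := by field_simp; linear_combination V22
  have v33 : g₃₃ = -D / P 2 1 := by field_simp; linear_combination V33
  have v13 : g₁₃ = (P 1 3 * P 2 2 - P 1 2 * P 2 3) / P 2 1 := by
    field_simp; linear_combination V13
  have v23 : g₂₃ = (P 1 1 * P 2 3 - P 1 3 * P 2 1) / P 2 1 := by
    field_simp; linear_combination V23
  subst v11 v12 v22 v33 v13 v23 V44 V34 V24 V14
  obtain ⟨z, hz⟩ := IsAlgClosed.exists_pow_nat_eq ((P 2 1)⁻¹) (n := 2) (by norm_num)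
  have hzne : z ≠ 0 := by
    intro h; rw [h] at hz; simp at hz; exact h21 hz.symm
  refine ⟨z, -(P 2 1 / D), -(P 2 2 / P 2 1),
    (-(P 1 2) * P 2 3 + P 1 3 * P 2 2) / D,
    (P 1 1 * P 2 2 * P 2 4 - P 1 2 * P 2 1 * P 2 4 + P 1 2 * P 2 2 * P 2 3
      - P 1 3 * P 2 2 ^ 2) / (D * P 2 1),
    (P 1 1 * P 2 3 - P 1 3 * P 2 1) / D,
    h₁ * P 2 1 / D, -(h₁ * P 2 2) / D - h₂ / P 2 1,
    hzne, neg_ne_zero.mpr (div_ne_zero h21 hnd), ?_, hz, ?_, ?_, ?_, ?_, ?_⟩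
  · apply Matrix.inv_eq_right_inv
    rw [hDdef]
    exact key_mul_aux (P 1 1) (P 1 2) (P 1 3) (P 2 1) (P 2 2) (P 2 3) (P 2 4) h₁ h₂ z
      h21 hnd hz
  · rw [hDdef, neg_div]
  · rw [neg_div]
  · rfl
  · rw [hDdef]
    rw [show (P 1 1 * P 2 2 - P 1 2 * P 2 1) * P 2 1
        = P 1 1 * P 2 1 * P 2 2 - P 1 2 * P 2 1 ^ 2 from by ring]
  · rfl
end

section
/- Let τ₀,...,τ₅ : U → ℂ be complex-differentiable functions on an open set U ⊆ ℂ, and let τ(t) be the τ-form matrix with these parameters. Then det τ(t) = −1 for all t (so τ(t) is always invertible), and the entrywise derivative satisfies the matrix identity (τᵀ)'(t) = A(t) · τ(t)ᵀ, where A(t) is the 5×5 matrix with rows (0,0,0,0,0), (−τ₅τ₀′+τ₄′, 0, τ₀′, −τ₃τ₀′+τ₁′, −τ₁τ₀′+τ₀τ₁′+τ₂′), (τ₅′, 0, 0, τ₃′, −τ₃τ₀′+τ₁′), (0,0,0,0,−τ₀′), (0,0,0,0,0), all evaluated at t. Equivalently, (dτᵀ)·(τᵀ)⁻¹ = A. 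-/
open Matrix

lemma tauMat_transpose (a b c d e f : ℂ) :
    (tauMat a b c d e f)ᵀ =
      !![1, 0, 0, 0, 0;
         e, a, 1, b, c;
         f, 1, 0, d, -a * d + b;
         0, 0, 0, 1, -a;
         0, 0, 0, 0, 1] := by
  ext i j
  fin_cases i <;> fin_cases j <;> rfl

set_option maxHeartbeats 1600000 in
theorem tau_matrix_derivative
    (U : Set ℂ) (hU : IsOpen U)
    (τ₀ τ₁ τ₂ τ₃ τ₄ τ₅ : ℂ → ℂ)
    (hτ₀ : DifferentiableOn ℂ τ₀ U) (hτ₁ : DifferentiableOn ℂ τ₁ U)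
    (hτ₂ : DifferentiableOn ℂ τ₂ U) (hτ₃ : DifferentiableOn ℂ τ₃ U)
    (hτ₄ : DifferentiableOn ℂ τ₄ U) (hτ₅ : DifferentiableOn ℂ τ₅ U)
    (τ : ℂ → Matrix (Fin 5) (Fin 5) ℂ)
    (hτ : ∀ t, τ t = tauMat (τ₀ t) (τ₁ t) (τ₂ t) (τ₃ t) (τ₄ t) (τ₅ t))
    (A : ℂ → Matrix (Fin 5) (Fin 5) ℂ)
    (hA : ∀ t, A t =
      !![0, 0, 0, 0, 0;
         -τ₅ t * deriv τ₀ t + deriv τ₄ t, 0, deriv τ₀ t,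
           -τ₃ t * deriv τ₀ t + deriv τ₁ t,
           -τ₁ t * deriv τ₀ t + τ₀ t * deriv τ₁ t + deriv τ₂ t;
         deriv τ₅ t, 0, 0, deriv τ₃ t, -τ₃ t * deriv τ₀ t + deriv τ₁ t;
         0, 0, 0, 0, -deriv τ₀ t;
         0, 0, 0, 0, 0]) :
    ∀ t ∈ U,
      (τ t).det = -1 ∧
      (∀ i j, HasDerivAt (fun s => (τ s)ᵀ i j) ((A t * (τ t)ᵀ) i j) t) ∧
      (Matrix.of fun i j => deriv (fun s => (τ s)ᵀ i j) t) * ((τ t)ᵀ)⁻¹ = A t := by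
  intro t ht
  have hmem := hU.mem_nhds ht
  have h0 : HasDerivAt τ₀ (deriv τ₀ t) t := ((hτ₀ t ht).differentiableAt hmem).hasDerivAt
  have h1 : HasDerivAt τ₁ (deriv τ₁ t) t := ((hτ₁ t ht).differentiableAt hmem).hasDerivAt
  have h2 : HasDerivAt τ₂ (deriv τ₂ t) t := ((hτ₂ t ht).differentiableAt hmem).hasDerivAt
  have h3 : HasDerivAt τ₃ (deriv τ₃ t) t := ((hτ₃ t ht).differentiableAt hmem).hasDerivAt
  have h4 : HasDerivAt τ₄ (deriv τ₄ t) t := ((hτ₄ t ht).differentiableAt hmem).hasDerivAt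
  have h5 : HasDerivAt τ₅ (deriv τ₅ t) t := ((hτ₅ t ht).differentiableAt hmem).hasDerivAt
  have hdet : (τ t).det = -1 := by
    rw [hτ]
    simp [tauMat, Matrix.det_succ_row_zero, Fin.sum_univ_succ, Fin.succAbove,
      Matrix.cons_val_succ]
  have hprod : A t * (τ t)ᵀ =
      !![0, 0, 0, 0, 0;
         deriv τ₄ t, deriv τ₀ t, 0, deriv τ₁ t, deriv τ₂ t;
         deriv τ₅ t, 0, 0, deriv τ₃ t,
           -deriv τ₀ t * τ₃ t + -τ₀ t * deriv τ₃ t + deriv τ₁ t;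
         0, 0, 0, 0, -deriv τ₀ t;
         0, 0, 0, 0, 0] := by
    rw [hA, hτ, tauMat_transpose]
    ext i j
    fin_cases i <;> fin_cases j <;>
      simp [Matrix.mul_apply, Fin.sum_univ_five, Matrix.vecHead, Matrix.vecTail,
        Function.comp] <;> ring
  have hpart2 : ∀ i j, HasDerivAt (fun s => (τ s)ᵀ i j) ((A t * (τ t)ᵀ) i j) t := by
    intro i j
    have hfun : (fun s => (τ s)ᵀ i j)
        = fun s => !![1, 0, 0, 0, 0;
            τ₄ s, τ₀ s, 1, τ₁ s, τ₂ s;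
            τ₅ s, 1, 0, τ₃ s, -τ₀ s * τ₃ s + τ₁ s;
            0, 0, 0, 1, -τ₀ s;
            0, 0, 0, 0, 1] i j := by
      funext s; rw [hτ, tauMat_transpose]
    rw [hfun, hprod]
    fin_cases i <;> fin_cases j <;>
      simp only [tauMat, Matrix.cons_val', Matrix.cons_val_zero, Matrix.cons_val_one,
        Matrix.head_cons, Matrix.empty_val', Matrix.cons_val_fin_one, Matrix.cons_val_two,
        Matrix.cons_val_three, Matrix.cons_val_four, Matrix.tail_cons, Matrix.head_fin_const,
        Fin.isValue, Fin.mk_zero, Fin.mk_one] <;>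
      first
      | exact hasDerivAt_const _ _
      | exact h0
      | exact h1
      | exact h2
      | exact h3
      | exact h4
      | exact h5
      | exact h0.neg
      | exact (h0.neg.mul h3).add h1
  refine ⟨hdet, hpart2, ?_⟩
  have hM : (Matrix.of fun i j => deriv (fun s => (τ s)ᵀ i j) t) = A t * (τ t)ᵀ := by
    ext i j
    exact (hpart2 i j).deriv
  rw [hM]
  have hdet' : IsUnit ((τ t)ᵀ).det := by
    rw [Matrix.det_transpose, hdet]
    exact isUnit_iff_ne_zero.mpr (by norm_num)
  exact Matrix.mul_nonsing_inv_cancel_right _ _ hdet'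
end

section
/- Let τ₀,...,τ₅ : U → ℂ be complex-differentiable functions on an open set U ⊆ ℂ, let τ(t) be the τ-form matrix with these parameters, and set A(t) := (τᵀ)'(t)·(τ(t)ᵀ)⁻¹. Fix t ∈ U with τ₀′(t) ≠ 0. If the entries of A(t) in positions (2,1), (2,4), (2,5) and (3,5) all vanish (rows and columns numbered 1 to 5), then τ₅(t) = τ₄′(t)/τ₀′(t), τ₃(t) = τ₁′(t)/τ₀′(t), and τ₁(t) = (τ₀(t)τ₁′(t) + τ₂′(t))/τ₀′(t). -/
open Matrix

theorem griffiths_transversality_relations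
    (U : Set ℂ) (hU : IsOpen U)
    (τ₀ τ₁ τ₂ τ₃ τ₄ τ₅ : ℂ → ℂ)
    (hτ₀ : DifferentiableOn ℂ τ₀ U) (hτ₁ : DifferentiableOn ℂ τ₁ U)
    (hτ₂ : DifferentiableOn ℂ τ₂ U) (hτ₃ : DifferentiableOn ℂ τ₃ U)
    (hτ₄ : DifferentiableOn ℂ τ₄ U) (hτ₅ : DifferentiableOn ℂ τ₅ U)
    (τ : ℂ → Matrix (Fin 5) (Fin 5) ℂ)
    (hτ : ∀ t, τ t = tauMat (τ₀ t) (τ₁ t) (τ₂ t) (τ₃ t) (τ₄ t) (τ₅ t))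
    (A : ℂ → Matrix (Fin 5) (Fin 5) ℂ)
    (hA : ∀ t, A t =
      (Matrix.of fun i j => deriv (fun s => (τ s)ᵀ i j) t) * ((τ t)ᵀ)⁻¹)
    (t : ℂ) (ht : t ∈ U)
    (hne : deriv τ₀ t ≠ 0)
    -- vanishing of the entries of A t in positions (2,1), (2,4), (2,5), (3,5)
    -- (rows and columns numbered 1 to 5):
    (h21 : A t 1 0 = 0) (h24 : A t 1 3 = 0) (h25 : A t 1 4 = 0) (h35 : A t 2 4 = 0) :
    τ₅ t = deriv τ₄ t / deriv τ₀ t ∧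
    τ₃ t = deriv τ₁ t / deriv τ₀ t ∧
    τ₁ t = (τ₀ t * deriv τ₁ t + deriv τ₂ t) / deriv τ₀ t := by
  -- τᵀ is invertible (det = -1)
  have hdet : IsUnit ((τ t)ᵀ).det := by
    rw [Matrix.det_transpose, hτ]
    have : (tauMat (τ₀ t) (τ₁ t) (τ₂ t) (τ₃ t) (τ₄ t) (τ₅ t)).det = -1 := by
      simp [tauMat, Matrix.det_succ_row_zero, Fin.sum_univ_succ,
        show (Fin.succAbove (1:Fin 4) 2) = 3 from rfl]
    rw [this]
    exact isUnit_iff_ne_zero.mpr (by norm_num)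
  -- A t * τᵀ = derivative matrix
  have hmul : A t * (τ t)ᵀ =
      Matrix.of fun i j => deriv (fun s => (τ s)ᵀ i j) t := by
    rw [hA, Matrix.mul_assoc, Matrix.nonsing_inv_mul _ hdet, Matrix.mul_one]
  -- identify the derivative entries in row 1
  have e0 : (fun s => (τ s)ᵀ (1 : Fin 5) 0) = τ₄ := by
    funext s; simp [hτ, tauMat]
  have e1 : (fun s => (τ s)ᵀ (1 : Fin 5) 1) = τ₀ := by
    funext s; simp [hτ, tauMat]
  have e2 : (fun s => (τ s)ᵀ (1 : Fin 5) 2) = fun _ => (1 : ℂ) := by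
    funext s; simp [hτ, tauMat]
  have e3 : (fun s => (τ s)ᵀ (1 : Fin 5) 3) = τ₁ := by
    funext s; simp [hτ, tauMat]
  have e4 : (fun s => (τ s)ᵀ (1 : Fin 5) 4) = τ₂ := by
    funext s; simp [hτ, tauMat]
  have q0 := congrFun (congrFun hmul 1) 0
  have q1 := congrFun (congrFun hmul 1) 1
  have q2 := congrFun (congrFun hmul 1) 2
  have q3 := congrFun (congrFun hmul 1) 3
  have q4 := congrFun (congrFun hmul 1) 4
  rw [Matrix.mul_apply, Fin.sum_univ_five] at q0 q1 q2 q3 q4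
  simp only [Matrix.of_apply] at q0 q1 q2 q3 q4
  rw [e0] at q0; rw [e1] at q1; rw [e2] at q2; rw [e3] at q3; rw [e4] at q4
  simp only [hτ, tauMat, Matrix.transpose_apply] at q0 q1 q2 q3 q4
  simp [h21, h24, h25] at q0 q1 q2 q3 q4
  -- q2 gives A t 1 1 = 0
  rw [q2] at q0 q1 q3 q4
  simp only [zero_mul, mul_zero, zero_add, add_zero] at q0 q1 q3 q4
  -- now q1 : A t 1 2 = deriv τ₀ t
  refine ⟨?_, ?_, ?_⟩
  · field_simp
    linear_combination q0 - τ₅ t * q1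
  · field_simp
    linear_combination q3 - τ₃ t * q1
  · field_simp
    linear_combination q4 + τ₀ t * q3 - τ₁ t * q1
end
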